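/- arXiv:1801.10498 — 6 statements merged into one kernel-verified Lean document; each statement's English description precedes it below -/
import Mathlib

section
/- Let 0 < λ̲ ≤ λ̄ be real constants and T* > 0. For any measurable functions λ', λ'' : [0,T*] → ℝ with λ̲ ≤ λ'(s) ≤ λ̄ and λ̲ ≤ λ''(s) ≤ λ̄ for all s, any α ∈ (0,1), and any t ∈ [0,T*], one has λ̲·t ≤ t − log( α·exp(∫₀ᵗ (1−λ'(s)) ds) + (1−α)·exp(∫₀ᵗ (1−λ''(s)) ds) ) ≤ λ̄·t. -/
open MeasureTheory intervalIntegral Real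

/-- Key estimate in the convexity proof (Lemma 1): the mixture intensity stays in the
band `[lamL, lamU]`. -/
theorem stmt0 (lamL lamU Tstar : ℝ) (hL : 0 < lamL) (hLU : lamL ≤ lamU) (hT : 0 < Tstar)
    (l1 l2 : ℝ → ℝ) (hm1 : Measurable l1) (hm2 : Measurable l2)
    (hb1 : ∀ s ∈ Set.Icc (0:ℝ) Tstar, l1 s ∈ Set.Icc lamL lamU)
    (hb2 : ∀ s ∈ Set.Icc (0:ℝ) Tstar, l2 s ∈ Set.Icc lamL lamU)
    (α : ℝ) (hα : α ∈ Set.Ioo (0:ℝ) 1) (t : ℝ) (ht : t ∈ Set.Icc (0:ℝ) Tstar) :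
    lamL * t ≤
      t - Real.log (α * Real.exp (∫ s in (0:ℝ)..t, (1 - l1 s)) +
        (1 - α) * Real.exp (∫ s in (0:ℝ)..t, (1 - l2 s))) ∧
    t - Real.log (α * Real.exp (∫ s in (0:ℝ)..t, (1 - l1 s)) +
        (1 - α) * Real.exp (∫ s in (0:ℝ)..t, (1 - l2 s))) ≤ lamU * t := by
  obtain ⟨ht0, htT⟩ := ht
  obtain ⟨hα0, hα1⟩ := hα
  -- integrability
  have key : ∀ (l : ℝ → ℝ), Measurable l →
      (∀ s ∈ Set.Icc (0:ℝ) Tstar, l s ∈ Set.Icc lamL lamU) →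
      IntervalIntegrable (fun s => 1 - l s) volume 0 t := by
    intro l hm hb
    rw [intervalIntegrable_iff, Set.uIoc_of_le ht0]
    apply Measure.integrableOn_of_bounded (M := 1 + |lamL| + |lamU|) (by simp)
      ((measurable_const.sub hm).aestronglyMeasurable)
    filter_upwards [ae_restrict_mem measurableSet_Ioc] with x hx
    have hx' : x ∈ Set.Icc (0:ℝ) Tstar := ⟨le_of_lt hx.1, hx.2.trans htT⟩
    obtain ⟨h1, h2⟩ := hb x hx'
    rw [Real.norm_eq_abs]
    have : |l x| ≤ |lamL| + |lamU| := by
      rcases abs_le_max_abs_abs h1 h2 with h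
      calc |l x| ≤ max |lamL| |lamU| := h
        _ ≤ |lamL| + |lamU| := max_le (le_add_of_nonneg_right (abs_nonneg _)) (le_add_of_nonneg_left (abs_nonneg _))
    calc |1 - l x| ≤ |1| + |l x| := abs_sub _ _
      _ ≤ 1 + (|lamL| + |lamU|) := by rw [abs_one]; linarith
      _ = 1 + |lamL| + |lamU| := by ring
  have hi1 := key l1 hm1 hb1
  have hi2 := key l2 hm2 hb2
  -- integral bounds
  have ibound : ∀ (l : ℝ → ℝ), IntervalIntegrable (fun s => 1 - l s) volume 0 t →
      (∀ s ∈ Set.Icc (0:ℝ) Tstar, l s ∈ Set.Icc lamL lamU) →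
      (1 - lamU) * t ≤ (∫ s in (0:ℝ)..t, (1 - l s)) ∧
      (∫ s in (0:ℝ)..t, (1 - l s)) ≤ (1 - lamL) * t := by
    intro l hi hb
    constructor
    · have := intervalIntegral.integral_mono_on ht0 (_root_.intervalIntegrable_const (c := 1 - lamU)) hi
        (fun x hx => by
          have := (hb x ⟨hx.1, hx.2.trans htT⟩).2; simp; linarith)
      simp only [intervalIntegral.integral_const, smul_eq_mul] at this
      linarith
    · have := intervalIntegral.integral_mono_on ht0 hi (_root_.intervalIntegrable_const (c := 1 - lamL))
        (fun x hx => by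
          have := (hb x ⟨hx.1, hx.2.trans htT⟩).1; simp; linarith)
      simp only [intervalIntegral.integral_const, smul_eq_mul] at this
      linarith
  obtain ⟨h1l, h1u⟩ := ibound l1 hi1 hb1
  obtain ⟨h2l, h2u⟩ := ibound l2 hi2 hb2
  set a := (∫ s in (0:ℝ)..t, (1 - l1 s))
  set b := (∫ s in (0:ℝ)..t, (1 - l2 s))
  have hmixlo : Real.exp ((1 - lamU) * t) ≤ α * Real.exp a + (1 - α) * Real.exp b := by
    have e1 : Real.exp ((1 - lamU) * t) ≤ Real.exp a := Real.exp_le_exp.2 h1l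
    have e2 : Real.exp ((1 - lamU) * t) ≤ Real.exp b := Real.exp_le_exp.2 h2l
    nlinarith [Real.exp_pos ((1 - lamU) * t)]
  have hmixhi : α * Real.exp a + (1 - α) * Real.exp b ≤ Real.exp ((1 - lamL) * t) := by
    have e1 : Real.exp a ≤ Real.exp ((1 - lamL) * t) := Real.exp_le_exp.2 h1u
    have e2 : Real.exp b ≤ Real.exp ((1 - lamL) * t) := Real.exp_le_exp.2 h2u
    nlinarith [Real.exp_pos ((1 - lamL) * t)]
  have hpos : 0 < α * Real.exp a + (1 - α) * Real.exp b := by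
    nlinarith [Real.exp_pos a, Real.exp_pos b]
  have hlog1 : (1 - lamU) * t ≤ Real.log (α * Real.exp a + (1 - α) * Real.exp b) := by
    calc (1 - lamU) * t = Real.log (Real.exp ((1 - lamU) * t)) := (Real.log_exp _).symm
      _ ≤ _ := Real.log_le_log (Real.exp_pos _) hmixlo
  have hlog2 : Real.log (α * Real.exp a + (1 - α) * Real.exp b) ≤ (1 - lamL) * t := by
    calc Real.log (α * Real.exp a + (1 - α) * Real.exp b)
        ≤ Real.log (Real.exp ((1 - lamL) * t)) := Real.log_le_log hpos hmixhi
      _ = (1 - lamL) * t := Real.log_exp _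
  constructor <;> nlinarith
end

section
/- Let 0 < λ̲ ≤ λ̄, T* > 0, α ∈ (0,1), and let λ', λ'' : [0,T*] → ℝ be continuous with values in [λ̲, λ̄]. Define λ : [0,T*] → ℝ by λ(t) = ( α·λ'(t)·exp(∫₀ᵗ(1−λ'(s))ds) + (1−α)·λ''(t)·exp(∫₀ᵗ(1−λ''(s))ds) ) / ( α·exp(∫₀ᵗ(1−λ'(s))ds) + (1−α)·exp(∫₀ᵗ(1−λ''(s))ds) ). Then (i) λ̲ ≤ λ(t) ≤ λ̄ for every t ∈ [0,T*], and (ii) for every t ∈ [0,T*], ∫₀ᵗ λ(s) ds = t − log( α·exp(∫₀ᵗ(1−λ'(s))ds) + (1−α)·exp(∫₀ᵗ(1−λ''(s))ds) ), equivalently exp(∫₀ᵗ(1−λ(s))ds) = α·exp(∫₀ᵗ(1−λ'(s))ds) + (1−α)·exp(∫₀ᵗ(1−λ''(s))ds). -/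
/-!
Write `Z^l(t) = exp ∫₀ᵗ (1 - l)` and `F = α Z^{l₁} + (1 - α) Z^{l₂}`. Since `(Z^l)' = (1 - l) Z^l`,
the mixed intensity `λ = (α l₁ Z^{l₁} + (1 - α) l₂ Z^{l₂}) / F` is exactly the one with
`F' = (1 - λ) F`, so `log F` is a primitive of `1 - λ` and `F(0) = 1` gives `F = Z^λ`.
Pointwise, `λ` is an average of `l₁` and `l₂` with positive weights, hence stays in their band.
-/

open MeasureTheory intervalIntegral Real Set

namespace DefaultIntensity

/-- The pre-default density factor `Z^l`. -/
noncomputable def densityFactor (l : ℝ → ℝ) (t : ℝ) : ℝ :=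
  exp (∫ s in (0:ℝ)..t, (1 - l s))

noncomputable def mixedIntensity (α : ℝ) (l₁ l₂ : ℝ → ℝ) (t : ℝ) : ℝ :=
  (α * l₁ t * densityFactor l₁ t + (1 - α) * l₂ t * densityFactor l₂ t) /
    (α * densityFactor l₁ t + (1 - α) * densityFactor l₂ t)

variable {l l₁ l₂ : ℝ → ℝ} {α t : ℝ}

theorem densityFactor_pos (l : ℝ → ℝ) (t : ℝ) : 0 < densityFactor l t := exp_pos _

@[simp]
theorem densityFactor_zero (l : ℝ → ℝ) : densityFactor l 0 = 1 := by
  simp [densityFactor]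

theorem continuousOn_densityFactor (ht : 0 ≤ t) (hl : ContinuousOn l (Icc 0 t)) :
    ContinuousOn (densityFactor l) (Icc 0 t) := by
  have hint : IntervalIntegrable (fun s => 1 - l s) volume 0 t :=
    (continuousOn_const.sub hl).intervalIntegrable_of_Icc ht
  rw [← uIcc_of_le ht]
  exact continuous_exp.comp_continuousOn (continuousOn_primitive_interval' hint left_mem_uIcc)

theorem hasDerivAt_densityFactor (hl : ContinuousOn l (Icc 0 t)) {x : ℝ} (hx : x ∈ Ioo 0 t) :
    HasDerivAt (densityFactor l) ((1 - l x) * densityFactor l x) x := by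
  have hcont : ContinuousOn (fun s => 1 - l s) (Ioo 0 t) :=
    (continuousOn_const.sub hl).mono Ioo_subset_Icc_self
  have hint : IntervalIntegrable (fun s => 1 - l s) volume 0 x :=
    ((continuousOn_const.sub hl).mono (Icc_subset_Icc_right hx.2.le)).intervalIntegrable_of_Icc
      hx.1.le
  exact (integral_hasDerivAt_right hint (hcont.stronglyMeasurableAtFilter isOpen_Ioo x hx)
    (hcont.continuousAt (isOpen_Ioo.mem_nhds hx))).exp.congr_deriv (mul_comm _ _)

theorem integral_eq_sub_log_densityFactor (hl : IntervalIntegrable l volume 0 t) :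
    ∫ s in (0:ℝ)..t, l s = t - log (densityFactor l t) := by
  rw [densityFactor, log_exp, integral_sub intervalIntegrable_const hl]
  simp

theorem densityFactor_eq_of_hasDerivAt {F m : ℝ → ℝ} (ht : 0 ≤ t)
    (hF : ContinuousOn F (Icc 0 t)) (hpos : ∀ x ∈ Icc 0 t, 0 < F x) (hF0 : F 0 = 1)
    (hderiv : ∀ x ∈ Ioo 0 t, HasDerivAt F ((1 - m x) * F x) x)
    (hm : IntervalIntegrable m volume 0 t) :
    densityFactor m t = F t := by
  have hlog : ∫ s in (0:ℝ)..t, (1 - m s) = log (F t) - log (F 0) := by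
    refine integral_eq_sub_of_hasDerivAt_of_le ht
      (hF.log fun x hx => (hpos x hx).ne') (fun x hx => ?_) (intervalIntegrable_const.sub hm)
    have hFx := hpos x (Ioo_subset_Icc_self hx)
    exact ((hderiv x hx).log hFx.ne').congr_deriv (by field_simp)
  rw [densityFactor, hlog, hF0, log_one, sub_zero, exp_log (hpos t (right_mem_Icc.2 ht))]

theorem mixture_pos (hα : α ∈ Icc 0 1) (t : ℝ) :
    0 < α * densityFactor l₁ t + (1 - α) * densityFactor l₂ t := by
  simpa only [smul_eq_mul, mem_Ioi] using convex_Ioi (0:ℝ) (densityFactor_pos l₁ t)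
    (densityFactor_pos l₂ t) hα.1 (sub_nonneg.2 hα.2) (add_sub_cancel α 1)

theorem mixedIntensity_mem_Icc {a b : ℝ} (hα : α ∈ Icc 0 1) (h₁ : l₁ t ∈ Icc a b)
    (h₂ : l₂ t ∈ Icc a b) : mixedIntensity α l₁ l₂ t ∈ Icc a b := by
  have hw₁ : 0 ≤ α * densityFactor l₁ t := mul_nonneg hα.1 (densityFactor_pos l₁ t).le
  have hw₂ : 0 ≤ (1 - α) * densityFactor l₂ t :=
    mul_nonneg (sub_nonneg.2 hα.2) (densityFactor_pos l₂ t).le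
  convert convex_iff_div.1 (convex_Icc a b) h₁ h₂ hw₁ hw₂ (mixture_pos hα t) using 1
  simp only [mixedIntensity, smul_eq_mul]
  ring

theorem continuousOn_mixedIntensity (hα : α ∈ Icc 0 1) (ht : 0 ≤ t)
    (hl₁ : ContinuousOn l₁ (Icc 0 t)) (hl₂ : ContinuousOn l₂ (Icc 0 t)) :
    ContinuousOn (mixedIntensity α l₁ l₂) (Icc 0 t) := by
  have hZ₁ := continuousOn_densityFactor ht hl₁
  have hZ₂ := continuousOn_densityFactor ht hl₂
  exact (((continuousOn_const.mul hl₁).mul hZ₁).add ((continuousOn_const.mul hl₂).mul hZ₂)).div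
    ((continuousOn_const.mul hZ₁).add (continuousOn_const.mul hZ₂))
    fun x _ => (mixture_pos hα x).ne'

theorem densityFactor_mixedIntensity (hα : α ∈ Icc 0 1) (ht : 0 ≤ t)
    (hl₁ : ContinuousOn l₁ (Icc 0 t)) (hl₂ : ContinuousOn l₂ (Icc 0 t)) :
    densityFactor (mixedIntensity α l₁ l₂) t =
      α * densityFactor l₁ t + (1 - α) * densityFactor l₂ t := by
  refine densityFactor_eq_of_hasDerivAt (F := fun x => α * densityFactor l₁ x +
      (1 - α) * densityFactor l₂ x) ht
    ((continuousOn_const.mul (continuousOn_densityFactor ht hl₁)).add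
      (continuousOn_const.mul (continuousOn_densityFactor ht hl₂)))
    (fun x _ => mixture_pos hα x) (by simp) (fun x hx => ?_)
    ((continuousOn_mixedIntensity hα ht hl₁ hl₂).intervalIntegrable_of_Icc ht)
  refine (((hasDerivAt_densityFactor hl₁ hx).const_mul α).add
    ((hasDerivAt_densityFactor hl₂ hx).const_mul (1 - α))).congr_deriv ?_
  have := (mixture_pos (l₁ := l₁) (l₂ := l₂) hα x).ne'
  simp only [mixedIntensity]
  field_simp
  ring

end DefaultIntensity

open DefaultIntensity in
theorem stmt1_general (lamL lamU Tstar : ℝ)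
    (α : ℝ) (hα : α ∈ Set.Ioo (0:ℝ) 1)
    (l1 l2 : ℝ → ℝ) (hc1 : ContinuousOn l1 (Set.Icc 0 Tstar))
    (hc2 : ContinuousOn l2 (Set.Icc 0 Tstar))
    (hb1 : ∀ s ∈ Set.Icc (0:ℝ) Tstar, l1 s ∈ Set.Icc lamL lamU)
    (hb2 : ∀ s ∈ Set.Icc (0:ℝ) Tstar, l2 s ∈ Set.Icc lamL lamU)
    (lam : ℝ → ℝ)
    (hlam : ∀ t ∈ Set.Icc (0:ℝ) Tstar,
      lam t = (α * l1 t * Real.exp (∫ s in (0:ℝ)..t, (1 - l1 s)) +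
               (1 - α) * l2 t * Real.exp (∫ s in (0:ℝ)..t, (1 - l2 s))) /
              (α * Real.exp (∫ s in (0:ℝ)..t, (1 - l1 s)) +
               (1 - α) * Real.exp (∫ s in (0:ℝ)..t, (1 - l2 s)))) :
    (∀ t ∈ Set.Icc (0:ℝ) Tstar, lam t ∈ Set.Icc lamL lamU) ∧
    (∀ t ∈ Set.Icc (0:ℝ) Tstar,
      (∫ s in (0:ℝ)..t, lam s) =
        t - Real.log (α * Real.exp (∫ s in (0:ℝ)..t, (1 - l1 s)) +
          (1 - α) * Real.exp (∫ s in (0:ℝ)..t, (1 - l2 s))) ∧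
      Real.exp (∫ s in (0:ℝ)..t, (1 - lam s)) =
        α * Real.exp (∫ s in (0:ℝ)..t, (1 - l1 s)) +
          (1 - α) * Real.exp (∫ s in (0:ℝ)..t, (1 - l2 s))) := by
  have hα' : α ∈ Icc 0 1 := Ioo_subset_Icc_self hα
  have hlam' : EqOn lam (mixedIntensity α l1 l2) (Icc 0 Tstar) := hlam
  refine ⟨fun t ht => hlam' ht ▸ mixedIntensity_mem_Icc hα' (hb1 t ht) (hb2 t ht),
    fun t ht => ?_⟩
  have hsub : Icc 0 t ⊆ Icc 0 Tstar := Icc_subset_Icc_right ht.2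
  have hc1' := hc1.mono hsub
  have hc2' := hc2.mono hsub
  have heq : EqOn lam (mixedIntensity α l1 l2) (uIcc 0 t) := by
    rw [uIcc_of_le ht.1]; exact hlam'.mono hsub
  have hZ := densityFactor_mixedIntensity hα' ht.1 hc1' hc2'
  rw [integral_congr heq, integral_congr (fun s hs => congrArg (1 - ·) (heq hs)),
    integral_eq_sub_log_densityFactor
      ((continuousOn_mixedIntensity hα' ht.1 hc1' hc2').intervalIntegrable_of_Icc ht.1)]
  exact ⟨congrArg (t - log ·) hZ, hZ⟩

/-- Construction underlying Lemma 1: the convex combination of two pre-default density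
factors is again a pre-default density factor of an intensity in the band. -/
theorem stmt1 (lamL lamU Tstar : ℝ) (hL : 0 < lamL) (hLU : lamL ≤ lamU) (hT : 0 < Tstar)
    (α : ℝ) (hα : α ∈ Set.Ioo (0:ℝ) 1)
    (l1 l2 : ℝ → ℝ) (hc1 : ContinuousOn l1 (Set.Icc 0 Tstar))
    (hc2 : ContinuousOn l2 (Set.Icc 0 Tstar))
    (hb1 : ∀ s ∈ Set.Icc (0:ℝ) Tstar, l1 s ∈ Set.Icc lamL lamU)
    (hb2 : ∀ s ∈ Set.Icc (0:ℝ) Tstar, l2 s ∈ Set.Icc lamL lamU)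
    (lam : ℝ → ℝ)
    (hlam : ∀ t ∈ Set.Icc (0:ℝ) Tstar,
      lam t = (α * l1 t * Real.exp (∫ s in (0:ℝ)..t, (1 - l1 s)) +
               (1 - α) * l2 t * Real.exp (∫ s in (0:ℝ)..t, (1 - l2 s))) /
              (α * Real.exp (∫ s in (0:ℝ)..t, (1 - l1 s)) +
               (1 - α) * Real.exp (∫ s in (0:ℝ)..t, (1 - l2 s)))) :
    (∀ t ∈ Set.Icc (0:ℝ) Tstar, lam t ∈ Set.Icc lamL lamU) ∧
    (∀ t ∈ Set.Icc (0:ℝ) Tstar,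
      (∫ s in (0:ℝ)..t, lam s) =
        t - Real.log (α * Real.exp (∫ s in (0:ℝ)..t, (1 - l1 s)) +
          (1 - α) * Real.exp (∫ s in (0:ℝ)..t, (1 - l2 s))) ∧
      Real.exp (∫ s in (0:ℝ)..t, (1 - lam s)) =
        α * Real.exp (∫ s in (0:ℝ)..t, (1 - l1 s)) +
          (1 - α) * Real.exp (∫ s in (0:ℝ)..t, (1 - l2 s))) :=
  stmt1_general lamL lamU Tstar α hα l1 l2 hc1 hc2 hb1 hb2 lam hlam
end

section
/- Let T* > 0, let μ be the exponential distribution with rate 1 on [0,∞) (density e^{−x}), and let λ : [0,T*] → ℝ be continuous with λ(s) > 0 for all s. Define Z : [0,∞) → ℝ by Z(x) = λ(x)·exp(∫₀ˣ (1−λ(s)) ds) for x ≤ T*, and Z(x) = exp(∫₀^{T*} (1−λ(s)) ds) for x > T*. Then ∫ Z dμ = 1; in particular Z·μ is a probability measure on [0,∞). -/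
open MeasureTheory intervalIntegral Real

/-- The exponential distribution with rate 1 on `[0,∞)`, as a measure on `ℝ`. -/
noncomputable def expMeasure1 : Measure ℝ :=
  (volume.restrict (Set.Ici (0:ℝ))).withDensity (fun x => ENNReal.ofReal (Real.exp (-x)))

/-!
With respect to Lebesgue measure on `[0, ∞)` the measure `Z · μ` has density `e^{-x} Z(x)`.
Writing `Λ(x) = ∫₀ˣ λ`, on `[0, T*]` this density is `λ(x) e^{-Λ(x)}`, the derivative of
`-e^{-Λ}`, so it carries mass `1 - e^{-Λ(T*)}`; beyond `T*` it is `e^{T* - Λ(T*)} e^{-x}`,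
which carries the remaining mass `e^{-Λ(T*)}`.
-/

open Set
open scoped ENNReal

lemma expMeasure1_eq_withDensity_toNNReal :
    expMeasure1 = (volume.restrict (Ici 0)).withDensity fun x => ((exp (-x)).toNNReal : ℝ≥0∞) :=
  rfl

lemma measurable_toNNReal_exp_neg : Measurable fun x : ℝ => (exp (-x)).toNNReal :=
  (continuous_exp.comp continuous_neg).measurable.real_toNNReal

lemma toNNReal_exp_neg_smul (x y : ℝ) : (exp (-x)).toNNReal • y = exp (-x) * y := by
  rw [NNReal.smul_def, Real.coe_toNNReal _ (exp_pos _).le, smul_eq_mul]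

lemma integrable_expMeasure1_iff {f : ℝ → ℝ} :
    Integrable f expMeasure1 ↔ IntegrableOn (fun x => exp (-x) * f x) (Ici 0) := by
  simp only [expMeasure1_eq_withDensity_toNNReal,
    integrable_withDensity_iff_integrable_smul measurable_toNNReal_exp_neg,
    toNNReal_exp_neg_smul, IntegrableOn]

lemma integral_expMeasure1 (f : ℝ → ℝ) :
    ∫ x, f x ∂expMeasure1 = ∫ x in Ici 0, exp (-x) * f x := by
  simp only [expMeasure1_eq_withDensity_toNNReal,
    integral_withDensity_eq_integral_smul measurable_toNNReal_exp_neg, toNNReal_exp_neg_smul]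

lemma ae_expMeasure1 {p : ℝ → Prop} (h : ∀ x, 0 ≤ x → p x) : ∀ᵐ x ∂expMeasure1, p x :=
  (withDensity_absolutelyContinuous _ _).ae_le <|
    (ae_restrict_iff' measurableSet_Ici).2 (Filter.Eventually.of_forall h)

lemma isProbabilityMeasure_withDensity_ofReal {α : Type*} [MeasurableSpace α] {μ : Measure α}
    {f : α → ℝ} (hf : Integrable f μ) (hf₀ : 0 ≤ᵐ[μ] f) (hf₁ : ∫ x, f x ∂μ = 1) :
    IsProbabilityMeasure (μ.withDensity fun x => ENNReal.ofReal (f x)) := by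
  constructor
  rw [withDensity_apply _ MeasurableSet.univ, Measure.restrict_univ,
    ← ofReal_integral_eq_lintegral_ofReal hf hf₀, hf₁, ENNReal.ofReal_one]

lemma continuousOn_primitive_Icc {l : ℝ → ℝ} {a b : ℝ} (hab : a ≤ b)
    (hl : ContinuousOn l (Icc a b)) : ContinuousOn (fun x => ∫ s in a..x, l s) (Icc a b) := by
  have := continuousOn_primitive_interval (μ := volume)
    (by rw [uIcc_of_le hab]; exact hl.integrableOn_Icc)
  rwa [uIcc_of_le hab] at this

lemma integral_mul_exp_neg_integral {l : ℝ → ℝ} {a b : ℝ} (hab : a ≤ b)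
    (hl : ContinuousOn l (Icc a b)) :
    ∫ x in a..b, l x * exp (-∫ s in a..x, l s) = 1 - exp (-∫ s in a..b, l s) := by
  have hL := continuousOn_primitive_Icc hab hl
  have hderiv : ∀ x ∈ Ioo a b, HasDerivWithinAt (fun y => -exp (-∫ s in a..y, l s))
      (l x * exp (-∫ s in a..x, l s)) (Ioi x) x := by
    intro x hx
    have hlx : HasDerivAt (fun y => ∫ s in a..y, l s) (l x) x :=
      integral_hasDerivAt_right
        ((hl.mono (Icc_subset_Icc_right hx.2.le)).intervalIntegrable_of_Icc hx.1.le)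
        ((hl.mono Ioo_subset_Icc_self).stronglyMeasurableAtFilter isOpen_Ioo x hx)
        (hl.continuousAt (Icc_mem_nhds hx.1 hx.2))
    simpa only [mul_neg, neg_mul, neg_neg, mul_comm] using hlx.fun_neg.exp.fun_neg.hasDerivWithinAt
  rw [integral_eq_sub_of_hasDeriv_right_of_le hab (continuous_exp.comp_continuousOn hL.neg).neg
    hderiv ((hl.mul (continuous_exp.comp_continuousOn hL.neg)).intervalIntegrable_of_Icc hab)]
  simp only [Pi.neg_apply, Function.comp_apply, integral_same, neg_zero, exp_zero,
    sub_neg_eq_add]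
  ring

section ExpTail

variable {f g : ℝ → ℝ} {a b c : ℝ}

lemma integrableOn_Ici_of_eqOn_Icc_of_exp_neg_Ioi (hab : a ≤ b) (hg : IntegrableOn g (Icc a b))
    (hfg : EqOn f g (Icc a b)) (hf : ∀ x > b, f x = c * exp (-x)) :
    IntegrableOn f (Ici a) := by
  rw [← Icc_union_Ioi_eq_Ici hab]
  refine (hg.congr_fun hfg.symm measurableSet_Icc).union ?_
  refine IntegrableOn.congr_fun ((exp_neg_integrableOn_Ioi b one_pos).const_mul c)
    (fun x hx => ?_) measurableSet_Ioi
  simp [hf x hx]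

lemma setIntegral_Ici_of_eqOn_Icc_of_exp_neg_Ioi (hab : a ≤ b) (hg : IntegrableOn g (Icc a b))
    (hfg : EqOn f g (Icc a b)) (hf : ∀ x > b, f x = c * exp (-x)) :
    ∫ x in Ici a, f x = (∫ x in a..b, g x) + c * exp (-b) := by
  have hfi := integrableOn_Ici_of_eqOn_Icc_of_exp_neg_Ioi hab hg hfg hf
  rw [← Icc_union_Ioi_eq_Ici hab] at hfi ⊢
  rw [setIntegral_union ((Iic_disjoint_Ioi le_rfl).mono_left Icc_subset_Iic_self)
      measurableSet_Ioi (hfi.mono_set subset_union_left) (hfi.mono_set subset_union_right),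
    setIntegral_congr_fun measurableSet_Ioi hf, MeasureTheory.integral_const_mul,
    integral_exp_neg_Ioi,
    integral_Icc_eq_integral_Ioc, ← integral_of_le hab,
    integral_congr (hfg.mono (uIcc_of_le hab).subset)]

end ExpTail

/-- The Girsanov-type density `Z^λ` integrates to one against the standard exponential
reference measure; in particular `Z^λ · μ` is a probability measure. -/
theorem stmt2 (Tstar : ℝ) (hT : 0 < Tstar)
    (l : ℝ → ℝ) (hc : ContinuousOn l (Set.Icc 0 Tstar))
    (hpos : ∀ s ∈ Set.Icc (0:ℝ) Tstar, 0 < l s)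
    (Z : ℝ → ℝ)
    (hZ : ∀ x, 0 ≤ x → Z x =
      if x ≤ Tstar then l x * Real.exp (∫ s in (0:ℝ)..x, (1 - l s))
      else Real.exp (∫ s in (0:ℝ)..Tstar, (1 - l s))) :
    (∫ x, Z x ∂expMeasure1) = 1 ∧
    IsProbabilityMeasure (expMeasure1.withDensity (fun x => ENNReal.ofReal (Z x))) := by
  set L : ℝ → ℝ := fun x => ∫ s in (0:ℝ)..x, l s
  have hL : ∀ x ∈ Icc 0 Tstar, ∫ s in (0:ℝ)..x, (1 - l s) = x - L x := fun x hx => by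
    rw [integral_sub intervalIntegrable_const
      ((hc.mono (Icc_subset_Icc_right hx.2)).intervalIntegrable_of_Icc hx.1)]
    simp [L]
  have hhead : EqOn (fun x => exp (-x) * Z x) (fun x => l x * exp (-L x)) (Icc 0 Tstar) :=
    fun x hx => by
      simp only [hZ x hx.1, if_pos hx.2, hL x hx, mul_left_comm (exp (-x)), ← exp_add]
      ring_nf
  have htail : ∀ x > Tstar, exp (-x) * Z x = exp (Tstar - L Tstar) * exp (-x) := fun x hx => by
    rw [hZ x (hT.le.trans hx.le), if_neg (not_le.2 hx), hL Tstar ⟨hT.le, le_rfl⟩, mul_comm]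
  have hhead_int : IntegrableOn (fun x => l x * exp (-L x)) (Icc 0 Tstar) :=
    (hc.mul (continuous_exp.comp_continuousOn
      (continuousOn_primitive_Icc hT.le hc).neg)).integrableOn_Icc
  have hint : Integrable Z expMeasure1 := integrable_expMeasure1_iff.2 <|
    integrableOn_Ici_of_eqOn_Icc_of_exp_neg_Ioi hT.le hhead_int hhead htail
  have hone : ∫ x, Z x ∂expMeasure1 = 1 := by
    rw [integral_expMeasure1,
      setIntegral_Ici_of_eqOn_Icc_of_exp_neg_Ioi hT.le hhead_int hhead htail,
      integral_mul_exp_neg_integral hT.le hc, ← exp_add]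
    simp only [L]
    ring_nf
  have hnonneg : 0 ≤ᵐ[expMeasure1] Z := ae_expMeasure1 fun x hx => by
    rw [hZ x hx]
    split_ifs with hxT
    · exact mul_nonneg (hpos x ⟨hx, hxT⟩).le (exp_pos _).le
    · exact (exp_pos _).le
  exact ⟨hone, isProbabilityMeasure_withDensity_ofReal hint hnonneg hone⟩
end

section
/- Let T* > 0, let μ be the exponential distribution with rate 1 on [0,∞) (density e^{−x}), and let λ : [0,T*] → ℝ be continuous with λ(s) > 0 for all s. Define Z : [0,∞) → ℝ by Z(x) = λ(x)·exp(∫₀ˣ (1−λ(s)) ds) for x ≤ T*, and Z(x) = exp(∫₀^{T*} (1−λ(s)) ds) for x > T*. Then for every t ∈ [0,T*], ∫_{(t,∞)} Z dμ = exp(−∫₀ᵗ λ(s) ds). -/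
/-!
On `[0, T*]` the weighted density `e^{-x} Z(x)` equals `λ(x) e^{-Λ(x)}` with `Λ(x) = ∫₀ˣ λ`,
which is `-(d/dx) e^{-Λ(x)}`, so its integral over `(t, T*]` is `e^{-Λ(t)} - e^{-Λ(T*)}`.
Beyond `T*` it is `e^{T* - Λ(T*)} e^{-x}`, whose integral over `(T*, ∞)` is `e^{-Λ(T*)}`.
The two pieces telescope to `e^{-Λ(t)}`.
-/

open MeasureTheory intervalIntegral Real

open Set
open scoped NNReal ENNReal

lemma setIntegral_expMeasure1 {s : Set ℝ} (hs : MeasurableSet s) (hs0 : s ⊆ Ici 0)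
    (f : ℝ → ℝ) : ∫ x in s, f x ∂expMeasure1 = ∫ x in s, exp (-x) * f x := by
  have hdens : (fun x : ℝ => ENNReal.ofReal (exp (-x))) = fun x => ((exp (-x)).toNNReal : ℝ≥0∞) :=
    rfl
  rw [expMeasure1, hdens, setIntegral_withDensity_eq_setIntegral_smul (by fun_prop) f hs,
    Measure.restrict_restrict hs, inter_eq_left.mpr hs0]
  refine setIntegral_congr_fun hs fun x _ => ?_
  simp [NNReal.smul_def, Real.coe_toNNReal _ (exp_pos _).le]

lemma exp_integral_one_sub {l : ℝ → ℝ} {x : ℝ} (hl : IntervalIntegrable l volume 0 x) :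
    exp (∫ s in (0:ℝ)..x, (1 - l s)) = exp x * exp (-∫ s in (0:ℝ)..x, l s) := by
  rw [integral_sub intervalIntegrable_const hl, ← exp_add]
  simp [sub_eq_add_neg]

section Primitive

variable {l : ℝ → ℝ} {a b c : ℝ}

lemma continuousOn_exp_neg_primitive (hcb : c ≤ b) (hl : ContinuousOn l (Icc c b)) :
    ContinuousOn (fun x => exp (-∫ s in c..x, l s)) (Icc c b) := by
  have hprim := continuousOn_primitive_interval (μ := volume) (a := c) (b := b)
    (by rw [uIcc_of_le hcb]; exact hl.integrableOn_Icc)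
  rw [uIcc_of_le hcb] at hprim
  exact hprim.neg.rexp

lemma hasDerivAt_exp_neg_primitive (hl : ContinuousOn l (Icc c b)) {x : ℝ} (hx : x ∈ Ioo c b) :
    HasDerivAt (fun y => exp (-∫ s in c..y, l s)) (-(l x * exp (-∫ s in c..x, l s))) x := by
  have hprim : HasDerivAt (fun y => ∫ s in c..y, l s) (l x) x :=
    integral_hasDerivAt_right
      ((hl.mono (Icc_subset_Icc le_rfl hx.2.le)).intervalIntegrable_of_Icc hx.1.le)
      ((hl.mono Ioo_subset_Icc_self).stronglyMeasurableAtFilter isOpen_Ioo x hx)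
      (hl.continuousAt (Icc_mem_nhds hx.1 hx.2))
  convert hprim.neg.exp using 1
  · rfl
  · rw [Pi.neg_apply]
    ring

lemma integral_mul_exp_neg_primitive (hca : c ≤ a) (hab : a ≤ b) (hl : ContinuousOn l (Icc c b)) :
    ∫ x in a..b, l x * exp (-∫ s in c..x, l s) =
      exp (-∫ s in c..a, l s) - exp (-∫ s in c..b, l s) := by
  have hsub : Icc a b ⊆ Icc c b := Icc_subset_Icc hca le_rfl
  have hcont := (continuousOn_exp_neg_primitive (hca.trans hab) hl).mono hsub
  have hFTC := integral_eq_sub_of_hasDerivAt_of_le hab hcont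
    (fun x hx => hasDerivAt_exp_neg_primitive hl ⟨hca.trans_lt hx.1, hx.2⟩)
    (((hl.mono hsub).mul hcont).intervalIntegrable_of_Icc hab).neg
  rw [intervalIntegral.integral_neg] at hFTC
  linarith

end Primitive

lemma setIntegral_Ioi_eq_intervalIntegral_add {f g : ℝ → ℝ} {t T C : ℝ} (htT : t ≤ T)
    (hg : ContinuousOn g (Icc t T)) (hfg : EqOn f g (Ioc t T))
    (hf : EqOn f (fun x => C * exp (-x)) (Ioi T)) :
    ∫ x in Ioi t, f x = (∫ x in t..T, g x) + C * exp (-T) := by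
  have hg_int : IntegrableOn g (Ioc t T) := hg.integrableOn_Icc.mono_set Ioc_subset_Icc_self
  have htail_int : IntegrableOn (fun x => C * exp (-x)) (Ioi T) := by
    have h := (exp_neg_integrableOn_Ioi T one_pos).const_mul C
    simp only [neg_mul, one_mul] at h
    exact h
  rw [← Ioc_union_Ioi_eq_Ioi htT,
    setIntegral_union (Ioc_disjoint_Ioi le_rfl) measurableSet_Ioi
      (hg_int.congr_fun hfg.symm measurableSet_Ioc) (htail_int.congr_fun hf.symm measurableSet_Ioi),
    setIntegral_congr_fun measurableSet_Ioc hfg, setIntegral_congr_fun measurableSet_Ioi hf,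
    integral_of_le htT, MeasureTheory.integral_const_mul, integral_exp_neg_Ioi]

theorem stmt3_general (Tstar : ℝ)
    (l : ℝ → ℝ) (hc : ContinuousOn l (Set.Icc 0 Tstar))
    (Z : ℝ → ℝ)
    (hZ : ∀ x, 0 ≤ x → Z x =
      if x ≤ Tstar then l x * Real.exp (∫ s in (0:ℝ)..x, (1 - l s))
      else Real.exp (∫ s in (0:ℝ)..Tstar, (1 - l s))) :
    ∀ t ∈ Set.Icc (0:ℝ) Tstar,
      (∫ x in Set.Ioi t, Z x ∂expMeasure1) =
        Real.exp (-∫ s in (0:ℝ)..t, l s) := by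
  rintro t ⟨ht0, htT⟩
  have hT : 0 ≤ Tstar := ht0.trans htT
  have hl_int : ∀ x ∈ Icc 0 Tstar, IntervalIntegrable l volume 0 x := fun x hx =>
    (hc.mono (Icc_subset_Icc le_rfl hx.2)).intervalIntegrable_of_Icc hx.1
  have hmid : EqOn (fun x => exp (-x) * Z x) (fun x => l x * exp (-∫ s in (0:ℝ)..x, l s))
      (Ioc t Tstar) := fun x hx => by
    have hx0 : 0 ≤ x := ht0.trans hx.1.le
    simp only [hZ x hx0, if_pos hx.2, exp_integral_one_sub (hl_int x ⟨hx0, hx.2⟩), exp_neg]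
    field_simp
  have htail : EqOn (fun x => exp (-x) * Z x)
      (fun x => exp (-∫ s in (0:ℝ)..Tstar, l s) * exp Tstar * exp (-x)) (Ioi Tstar) :=
    fun x hx => by
      dsimp only
      rw [hZ x (hT.trans hx.le), if_neg (not_le.mpr hx),
        exp_integral_one_sub (hl_int Tstar ⟨hT, le_rfl⟩)]
      ring
  have hmid_cont : ContinuousOn (fun x => l x * exp (-∫ s in (0:ℝ)..x, l s)) (Icc t Tstar) :=
    (hc.mul (continuousOn_exp_neg_primitive hT hc)).mono (Icc_subset_Icc ht0 le_rfl)
  rw [setIntegral_expMeasure1 measurableSet_Ioi (fun x hx => ht0.trans (le_of_lt hx)),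
    setIntegral_Ioi_eq_intervalIntegral_add htT hmid_cont hmid htail,
    integral_mul_exp_neg_primitive ht0 htT hc, mul_assoc, ← exp_add, add_neg_cancel, exp_zero,
    mul_one, sub_add_cancel]

/-- Under the measure with density `Z^λ` with respect to the standard exponential
reference measure, the default time has survival function `exp (-∫_0^t λ)`. -/
theorem stmt3 (Tstar : ℝ) (hT : 0 < Tstar)
    (l : ℝ → ℝ) (hc : ContinuousOn l (Set.Icc 0 Tstar))
    (hpos : ∀ s ∈ Set.Icc (0:ℝ) Tstar, 0 < l s)
    (Z : ℝ → ℝ)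
    (hZ : ∀ x, 0 ≤ x → Z x =
      if x ≤ Tstar then l x * Real.exp (∫ s in (0:ℝ)..x, (1 - l s))
      else Real.exp (∫ s in (0:ℝ)..Tstar, (1 - l s))) :
    ∀ t ∈ Set.Icc (0:ℝ) Tstar,
      (∫ x in Set.Ioi t, Z x ∂expMeasure1) =
        Real.exp (-∫ s in (0:ℝ)..t, l s) :=
  stmt3_general Tstar l hc Z hZ
end

section
/- Let T* > 0, let f₀ : [0,T*] → ℝ be integrable, and let a : [0,T*] × [0,T*] → ℝ be jointly measurable with ∫₀^{T*}∫₀^{T*} |a(s,u)| ds du < ∞. Define f(t,u) = f₀(u) + ∫₀ᵗ a(s,u) ds. Then for all 0 ≤ t ≤ T ≤ T*: ∫_t^T f(t,u) du = ∫₀^T f₀(u) du + ∫₀ᵗ ( ∫_s^T a(s,u) du ) ds − ∫₀ᵗ f(u,u) du. -/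
open MeasureTheory intervalIntegral Set Function

/-!
Both `f t u` on `[t, T]` and `f u u` on `[0, t]` are `f (min t u) u`, so the left-hand side
plus `∫₀ᵗ f(u,u) du` is `∫₀ᵀ f(min t u, u) du = ∫₀ᵀ f₀ + ∫₀ᵀ ∫₀^{min t u} a(s,u) ds du`.
The last double integral is `∫₀ᵗ ∫ₛᵀ a(s,u) du ds` by Fubini on the region
`{0 < s ≤ t, s ≤ u ≤ T}`, realised as the indicator of `s ≤ u` on the rectangle `(0,t] × (0,T]`.
-/

section

variable {F : ℝ → ℝ → ℝ} {a t T s u : ℝ}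

noncomputable def aboveDiagonal (F : ℝ → ℝ → ℝ) : ℝ × ℝ → ℝ :=
  {p : ℝ × ℝ | p.1 ≤ p.2}.indicator (uncurry F)

lemma integrable_aboveDiagonal (hF : IntegrableOn (uncurry F) (Icc a t ×ˢ Icc a T)) :
    Integrable (aboveDiagonal F)
      ((volume.restrict (Ioc a t)).prod (volume.restrict (Ioc a T))) := by
  rw [Measure.prod_restrict]
  exact ((hF.mono_set (prod_mono Ioc_subset_Icc_self Ioc_subset_Icc_self)).indicator
    (measurableSet_le measurable_fst measurable_snd))

lemma setIntegral_aboveDiagonal_left (hs : s ∈ Ioc a T) :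
    ∫ u in Ioc a T, aboveDiagonal F (s, u) = ∫ u in s..T, F s u := by
  have : (fun u ↦ aboveDiagonal F (s, u)) = (Ici s).indicator (F s) := by
    ext u; simp only [aboveDiagonal, indicator_apply, mem_ofPred_eq, mem_Ici, uncurry_apply_pair]
  have hinter : Ioc a T ∩ Ici s = Icc s T := by
    ext u
    simp only [mem_inter_iff, mem_Ioc, mem_Ici, mem_Icc]
    exact ⟨fun ⟨⟨_, huT⟩, hsu⟩ ↦ ⟨hsu, huT⟩,
      fun ⟨hsu, huT⟩ ↦ ⟨⟨hs.1.trans_le hsu, huT⟩, hsu⟩⟩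
  rw [this, setIntegral_indicator measurableSet_Ici, hinter, integral_Icc_eq_integral_Ioc,
    integral_of_le hs.2]

lemma setIntegral_aboveDiagonal_right (hat : a ≤ t) (hu : a ≤ u) :
    ∫ s in Ioc a t, aboveDiagonal F (s, u) = ∫ s in a..min t u, F s u := by
  have : (fun s ↦ aboveDiagonal F (s, u)) = (Iic u).indicator (F · u) := by
    ext s; simp only [aboveDiagonal, indicator_apply, mem_ofPred_eq, mem_Iic, uncurry_apply_pair]
  rw [this, setIntegral_indicator measurableSet_Iic, Ioc_inter_Iic, integral_of_le (le_min hat hu)]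

lemma intervalIntegrable_integral_min (hat : a ≤ t) (haT : a ≤ T)
    (hF : IntegrableOn (uncurry F) (Icc a t ×ˢ Icc a T)) :
    IntervalIntegrable (fun u ↦ ∫ s in a..min t u, F s u) volume a T := by
  rw [intervalIntegrable_iff_integrableOn_Ioc_of_le haT]
  refine (integrable_aboveDiagonal hF).integral_prod_right.congr ?_
  filter_upwards [ae_restrict_mem measurableSet_Ioc] with u hu
  exact setIntegral_aboveDiagonal_right hat hu.1.le

theorem integral_integral_swap_triangle (hat : a ≤ t) (htT : t ≤ T)
    (hF : IntegrableOn (uncurry F) (Icc a t ×ˢ Icc a T)) :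
    ∫ s in a..t, ∫ u in s..T, F s u = ∫ u in a..T, ∫ s in a..min t u, F s u := calc
  ∫ s in a..t, ∫ u in s..T, F s u
    = ∫ s in Ioc a t, ∫ u in Ioc a T, aboveDiagonal F (s, u) := by
      rw [integral_of_le hat]
      refine setIntegral_congr_fun measurableSet_Ioc fun s hs ↦ ?_
      exact (setIntegral_aboveDiagonal_left ⟨hs.1, hs.2.trans htT⟩).symm
  _ = ∫ u in Ioc a T, ∫ s in Ioc a t, aboveDiagonal F (s, u) :=
      integral_integral_swap (f := fun s u ↦ aboveDiagonal F (s, u)) (integrable_aboveDiagonal hF)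
  _ = ∫ u in a..T, ∫ s in a..min t u, F s u := by
      rw [integral_of_le (hat.trans htT)]
      exact setIntegral_congr_fun measurableSet_Ioc fun u hu ↦
        setIntegral_aboveDiagonal_right hat hu.1.le

end

theorem stmt5_general (Tstar : ℝ)
    (f₀ : ℝ → ℝ) (hf₀ : IntegrableOn f₀ (Set.Icc 0 Tstar))
    (a : ℝ → ℝ → ℝ)
    (hint : IntegrableOn (Function.uncurry a) (Set.Icc 0 Tstar ×ˢ Set.Icc 0 Tstar))
    (f : ℝ → ℝ → ℝ)
    (hf : ∀ t u, f t u = f₀ u + ∫ s in (0:ℝ)..t, a s u) :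
    ∀ t T, 0 ≤ t → t ≤ T → T ≤ Tstar →
      (∫ u in t..T, f t u) =
        (∫ u in (0:ℝ)..T, f₀ u) + (∫ s in (0:ℝ)..t, ∫ u in s..T, a s u)
          - ∫ u in (0:ℝ)..t, f u u := by
  intro t T ht htT hTs
  have h0T : 0 ≤ T := ht.trans htT
  have ha : IntegrableOn (uncurry a) (Icc 0 t ×ˢ Icc 0 T) :=
    hint.mono_set (prod_mono (Icc_subset_Icc_right (htT.trans hTs)) (Icc_subset_Icc_right hTs))
  have hf₀T : IntervalIntegrable f₀ volume 0 T :=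
    (intervalIntegrable_iff_integrableOn_Icc_of_le h0T).2
      (hf₀.mono_set (Icc_subset_Icc_right hTs))
  have hdiag : IntervalIntegrable (fun u ↦ f (min t u) u) volume 0 T := by
    simp only [hf]
    exact hf₀T.add (intervalIntegrable_integral_min ht h0T ha)
  have hsplit : ∫ u in (0:ℝ)..T, f (min t u) u
      = (∫ u in (0:ℝ)..t, f u u) + ∫ u in t..T, f t u := by
    rw [← integral_add_adjacent_intervals (hdiag.mono_set ?_) (hdiag.mono_set ?_)]
    · congr 1
      · exact integral_congr fun u hu ↦ by
          rw [uIcc_of_le ht] at hu; rw [min_eq_right hu.2]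
      · exact integral_congr fun u hu ↦ by
          rw [uIcc_of_le htT] at hu; rw [min_eq_left hu.1]
    · exact uIcc_subset_uIcc_left (by simp [uIcc_of_le h0T, ht, htT])
    · exact uIcc_subset_uIcc_right (by simp [uIcc_of_le h0T, ht, htT])
  have hexpand : ∫ u in (0:ℝ)..T, f (min t u) u
      = (∫ u in (0:ℝ)..T, f₀ u) + ∫ s in (0:ℝ)..t, ∫ u in s..T, a s u := by
    simp only [hf]
    rw [integral_add hf₀T (intervalIntegrable_integral_min ht h0T ha),
      integral_integral_swap_triangle ht htT ha]
  linarith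

/-- Fubini-type rearrangement of the forward-rate drift (drift part of the paper's
Lemma on the HJM representation). -/
theorem stmt5 (Tstar : ℝ) (hT : 0 < Tstar)
    (f₀ : ℝ → ℝ) (hf₀ : IntegrableOn f₀ (Set.Icc 0 Tstar))
    (a : ℝ → ℝ → ℝ) (hma : Measurable (Function.uncurry a))
    (hint : IntegrableOn (Function.uncurry a) (Set.Icc 0 Tstar ×ˢ Set.Icc 0 Tstar))
    (f : ℝ → ℝ → ℝ)
    (hf : ∀ t u, f t u = f₀ u + ∫ s in (0:ℝ)..t, a s u) :
    ∀ t T, 0 ≤ t → t ≤ T → T ≤ Tstar →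
      (∫ u in t..T, f t u) =
        (∫ u in (0:ℝ)..T, f₀ u) + (∫ s in (0:ℝ)..t, ∫ u in s..T, a s u)
          - ∫ u in (0:ℝ)..t, f u u :=
  stmt5_general Tstar f₀ hf₀ a hint f hf
end

section
/- Let T* > 0 and 0 < λ̲ ≤ λ̄, and let μ be the exponential distribution with rate 1 on [0,∞). For a measurable λ : [0,T*] → [λ̲,λ̄], define Z^λ : [0,∞) → ℝ by Z^λ(x) = λ(x)·exp(∫₀ˣ (1−λ(s)) ds) for x ≤ T*, and Z^λ(x) = exp(∫₀^{T*} (1−λ(s)) ds) for x > T*, and let P^λ = Z^λ·μ be the measure on [0,∞) with density Z^λ with respect to μ. Then the set 𝒫̄ = { P^λ : λ measurable with λ̲ ≤ λ(s) ≤ λ̄ for all s ∈ [0,T*] } of measures on [0,∞) is convex: for P^{λ'}, P^{λ''} ∈ 𝒫̄ and α ∈ (0,1), there exists a measurable λ : [0,T*] → [λ̲,λ̄] with α·P^{λ'} + (1−α)·P^{λ''} = P^λ. -/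
/-!
Write `Eₖ x = exp ∫₀ˣ (1 - k)`. The density of `P^k` is `k Eₖ` on `[0, T*]` and the constant
`Eₖ T*` beyond, so `a P^{k₁} + b P^{k₂}` (with `a + b = 1`) is `P^k` as soon as
`Eₖ = a E₁ + b E₂` and `k Eₖ = a k₁ E₁ + b k₂ E₂`. The second equation forces `k` to be the average
of `k₁, k₂` with weights `a E₁, b E₂`, which stays in the band. The first then holds because both
sides solve `E' = (1 - k) E` in the absolutely continuous sense: their quotient is absolutely
continuous with derivative `0` almost everywhere, hence constant. Intensities given only on
`[0, T*]` are first clamped into the band on all of `ℝ`, which does not change the priors.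
-/

open MeasureTheory intervalIntegral Real

/-- The Girsanov-type density of the prior with intensity `l` on the canonical
default-time space. -/
noncomputable def densityZ (Tstar : ℝ) (l : ℝ → ℝ) (x : ℝ) : ℝ :=
  if x ≤ Tstar then l x * Real.exp (∫ s in (0:ℝ)..x, (1 - l s))
  else Real.exp (∫ s in (0:ℝ)..Tstar, (1 - l s))

/-- The prior `P^λ` under which the canonical default time has intensity `l`. -/
noncomputable def priorP (Tstar : ℝ) (l : ℝ → ℝ) : Measure ℝ :=
  expMeasure1.withDensity (fun x => ENNReal.ofReal (densityZ Tstar l x))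

open Filter Set Topology

theorem locallyIntegrable_of_abs_le {f : ℝ → ℝ} {C : ℝ} (hf : AEStronglyMeasurable f volume)
    (hC : ∀ s, |f s| ≤ C) : LocallyIntegrable f volume :=
  (locallyIntegrable_const C).mono hf
    (ae_of_all _ fun s => (hC s).trans (le_abs_self C))

theorem lipschitzWith_intervalIntegral_of_abs_le {f : ℝ → ℝ} {C : ℝ}
    (hf : AEStronglyMeasurable f volume) (hC : ∀ s, |f s| ≤ C) (c : ℝ) :
    LipschitzWith C.toNNReal (fun x => ∫ t in c..x, f t) := by
  have hint (a b : ℝ) : IntervalIntegrable f volume a b :=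
    ((locallyIntegrable_of_abs_le hf hC).integrableOn_isCompact isCompact_uIcc).intervalIntegrable
  refine LipschitzWith.of_dist_le_mul fun x y => ?_
  rw [Real.dist_eq, integral_interval_sub_left (hint _ _) (hint _ _), Real.dist_eq]
  calc |∫ t in y..x, f t| ≤ C * |x - y| :=
        norm_integral_le_of_norm_le_const fun s _ => (Real.norm_eq_abs _).trans_le (hC s)
    _ ≤ C.toNNReal * |x - y| := by gcongr; exact Real.le_coe_toNNReal C

theorem LipschitzOnWith.absolutelyContinuousOnInterval_comp {φ f : ℝ → ℝ} {K : NNReal}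
    {a b : ℝ} (hφ : ContDiff ℝ 1 φ) (hf : LipschitzOnWith K f (uIcc a b)) :
    AbsolutelyContinuousOnInterval (φ ∘ f) a b := by
  obtain ⟨R, hR⟩ := (Metric.isBounded_iff_subset_closedBall 0).1
    (isCompact_uIcc.image_of_continuousOn hf.continuousOn).isBounded
  obtain ⟨K', hK'⟩ := hφ.contDiffOn.exists_lipschitzOnWith one_ne_zero (convex_closedBall 0 R)
    (isCompact_closedBall 0 R)
  exact (hK'.comp hf (mapsTo_iff_image_subset.2 hR)).absolutelyContinuousOnInterval

theorem abs_one_sub_le_of_mem_Icc {L U v : ℝ} (h : v ∈ Icc L U) :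
    |1 - v| ≤ max |1 - U| |1 - L| :=
  abs_le_max_abs_abs (by linarith [h.2]) (by linarith [h.1])

/-- `exp (∫₀ˢ (1 - k))` is the ratio `e^{-∫₀ˢ k} / e^{-s}` of the survival function under
intensity `k` to that under the reference measure. -/
noncomputable def survivalRatio (k : ℝ → ℝ) (s : ℝ) : ℝ :=
  Real.exp (∫ t in (0:ℝ)..s, (1 - k t))

/-- The intensity of the mixture `a P^{k₁} + b P^{k₂}`: the derivative of the paper's
`s - log (a E₁ s + b E₂ s)`, where `Eᵢ = survivalRatio kᵢ`. -/
noncomputable def mixIntensity (a b : ℝ) (k₁ k₂ : ℝ → ℝ) (s : ℝ) : ℝ :=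
  (a * k₁ s * survivalRatio k₁ s + b * k₂ s * survivalRatio k₂ s) /
    (a * survivalRatio k₁ s + b * survivalRatio k₂ s)

section Mixture

variable {L U a b : ℝ} {k k₁ k₂ : ℝ → ℝ}

theorem survivalRatio_pos (k : ℝ → ℝ) (s : ℝ) : 0 < survivalRatio k s := Real.exp_pos _

theorem mixture_survivalRatio_pos (ha : 0 < a) (hb : 0 < b) (k₁ k₂ : ℝ → ℝ) (s : ℝ) :
    0 < a * survivalRatio k₁ s + b * survivalRatio k₂ s := by
  have := survivalRatio_pos k₁ s
  have := survivalRatio_pos k₂ s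
  positivity

theorem lipschitzWith_integral_one_sub (hk : Measurable k) (hkb : ∀ s, k s ∈ Icc L U) :
    ∃ K, LipschitzWith K (fun x => ∫ t in (0:ℝ)..x, (1 - k t)) :=
  ⟨_, lipschitzWith_intervalIntegral_of_abs_le (measurable_const.sub hk).aestronglyMeasurable
    (fun s => abs_one_sub_le_of_mem_Icc (hkb s)) 0⟩

theorem continuous_survivalRatio (hk : Measurable k) (hkb : ∀ s, k s ∈ Icc L U) :
    Continuous (survivalRatio k) :=
  have ⟨_, hK⟩ := lipschitzWith_integral_one_sub hk hkb
  Real.continuous_exp.comp hK.continuous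

theorem measurable_mixIntensity (hk₁ : Measurable k₁) (hk₂ : Measurable k₂)
    (hk₁b : ∀ s, k₁ s ∈ Icc L U) (hk₂b : ∀ s, k₂ s ∈ Icc L U) :
    Measurable (mixIntensity a b k₁ k₂) := by
  have hE₁ := (continuous_survivalRatio hk₁ hk₁b).measurable
  have hE₂ := (continuous_survivalRatio hk₂ hk₂b).measurable
  unfold mixIntensity
  fun_prop

theorem mixIntensity_mem_Icc (ha : 0 < a) (hb : 0 < b) {s : ℝ} (h₁ : k₁ s ∈ Icc L U)
    (h₂ : k₂ s ∈ Icc L U) : mixIntensity a b k₁ k₂ s ∈ Icc L U := by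
  have hE₁ := mul_pos ha (survivalRatio_pos k₁ s)
  have hE₂ := mul_pos hb (survivalRatio_pos k₂ s)
  have hD := mixture_survivalRatio_pos ha hb k₁ k₂ s
  rw [mixIntensity, mem_Icc, le_div_iff₀ hD, div_le_iff₀ hD]
  constructor <;> nlinarith [h₁.1, h₁.2, h₂.1, h₂.2]

theorem ae_hasDerivAt_integral_one_sub (hk : Measurable k) (hkb : ∀ s, k s ∈ Icc L U) :
    ∀ᵐ x, HasDerivAt (fun x => ∫ t in (0:ℝ)..x, (1 - k t)) (1 - k x) x := by
  filter_upwards [LocallyIntegrable.ae_hasDerivAt_integral (locallyIntegrable_of_abs_le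
    (measurable_const.sub hk).aestronglyMeasurable fun s => abs_one_sub_le_of_mem_Icc (hkb s))]
    with x hx
  exact hx 0

theorem absolutelyContinuousOnInterval_comp_integral_one_sub {φ : ℝ → ℝ}
    (hφ : ContDiff ℝ 1 φ) (hk : Measurable k) (hkb : ∀ s, k s ∈ Icc L U) (x y : ℝ) :
    AbsolutelyContinuousOnInterval (fun s => φ (∫ t in (0:ℝ)..s, (1 - k t))) x y :=
  have ⟨_, hK⟩ := lipschitzWith_integral_one_sub hk hkb
  (hK.lipschitzOnWith (s := uIcc x y)).absolutelyContinuousOnInterval_comp hφ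

theorem mixture_survivalRatio_mul_one_sub_mixIntensity (ha : 0 < a) (hb : 0 < b) (s : ℝ) :
    (a * survivalRatio k₁ s + b * survivalRatio k₂ s) * (1 - mixIntensity a b k₁ k₂ s) =
      a * survivalRatio k₁ s * (1 - k₁ s) + b * survivalRatio k₂ s * (1 - k₂ s) := by
  rw [mixIntensity, mul_sub, mul_div_cancel₀ _ (mixture_survivalRatio_pos ha hb k₁ k₂ s).ne']
  ring

theorem mixture_survivalRatio_eq (ha : 0 < a) (hb : 0 < b) (hk₁ : Measurable k₁)
    (hk₂ : Measurable k₂) (hk₁b : ∀ s, k₁ s ∈ Icc L U) (hk₂b : ∀ s, k₂ s ∈ Icc L U) (x : ℝ) :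
    a * survivalRatio k₁ x + b * survivalRatio k₂ x =
      (a + b) * survivalRatio (mixIntensity a b k₁ k₂) x := by
  set k := mixIntensity a b k₁ k₂
  have hk : Measurable k := measurable_mixIntensity hk₁ hk₂ hk₁b hk₂b
  have hkb (s : ℝ) : k s ∈ Icc L U := mixIntensity_mem_Icc ha hb (hk₁b s) (hk₂b s)
  set q : ℝ → ℝ := fun s =>
    (a * survivalRatio k₁ s + b * survivalRatio k₂ s) * Real.exp (-∫ t in (0:ℝ)..s, (1 - k t))
  have hq_ac : AbsolutelyContinuousOnInterval q 0 x := by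
    have hexp : ContDiff ℝ 1 Real.exp := Real.contDiff_exp
    refine (((absolutelyContinuousOnInterval_comp_integral_one_sub hexp hk₁ hk₁b 0 x).const_mul
      a).add ((absolutelyContinuousOnInterval_comp_integral_one_sub hexp hk₂ hk₂b 0 x).const_mul
      b)).mul (absolutelyContinuousOnInterval_comp_integral_one_sub
        (hexp.comp contDiff_neg) hk hkb 0 x)
  have hq_deriv : ∀ᵐ s, s ∈ uIcc 0 x → HasDerivAt q 0 s := by
    filter_upwards [ae_hasDerivAt_integral_one_sub hk₁ hk₁b,
      ae_hasDerivAt_integral_one_sub hk₂ hk₂b, ae_hasDerivAt_integral_one_sub hk hkb]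
      with s h₁ h₂ h _
    refine (((h₁.exp.const_mul a).add (h₂.exp.const_mul b)).mul h.neg.exp).congr_deriv ?_
    have key := mixture_survivalRatio_mul_one_sub_mixIntensity (k₁ := k₁) (k₂ := k₂) ha hb s
    simp only [survivalRatio, Pi.add_apply, Pi.neg_apply] at key ⊢
    linear_combination (-Real.exp (-∫ t in (0:ℝ)..s, (1 - k t))) * key
  obtain ⟨C, hC⟩ := hq_ac.const_of_ae_hasDerivAt_zero hq_deriv
  have hq : q x = a + b := by
    rw [hC x right_mem_uIcc, ← hC 0 left_mem_uIcc]
    simp [q, survivalRatio]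
  rw [← hq]
  simp only [q, survivalRatio, mul_assoc, ← Real.exp_add, neg_add_cancel, Real.exp_zero, mul_one]

end Mixture

section Prior

variable {T L U a b : ℝ} {k k₁ k₂ l m : ℝ → ℝ}

theorem densityZ_eq_ite (T : ℝ) (k : ℝ → ℝ) (x : ℝ) :
    densityZ T k x = if x ≤ T then k x * survivalRatio k x else survivalRatio k T := rfl

theorem measurable_densityZ (hk : Measurable k) (hkb : ∀ s, k s ∈ Icc L U) :
    Measurable (densityZ T k) := by
  have hE := (continuous_survivalRatio hk hkb).measurable
  unfold densityZ
  exact Measurable.ite (measurableSet_le measurable_id measurable_const) (hk.mul hE)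
    measurable_const

theorem densityZ_nonneg (hL : 0 ≤ L) (hkb : ∀ s, k s ∈ Icc L U) (x : ℝ) :
    0 ≤ densityZ T k x := by
  have := survivalRatio_pos k x
  have := survivalRatio_pos k T
  have := hL.trans (hkb x).1
  rw [densityZ_eq_ite]
  split_ifs <;> positivity

theorem mixture_densityZ_eq (ha : 0 < a) (hb : 0 < b) (hab : a + b = 1) (hk₁ : Measurable k₁)
    (hk₂ : Measurable k₂) (hk₁b : ∀ s, k₁ s ∈ Icc L U) (hk₂b : ∀ s, k₂ s ∈ Icc L U) (x : ℝ) :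
    a * densityZ T k₁ x + b * densityZ T k₂ x = densityZ T (mixIntensity a b k₁ k₂) x := by
  have hmix (y : ℝ) := mixture_survivalRatio_eq ha hb hk₁ hk₂ hk₁b hk₂b y
  simp only [hab, one_mul] at hmix
  simp only [densityZ_eq_ite]
  split_ifs
  · rw [← hmix, mixIntensity, div_mul_cancel₀ _ (mixture_survivalRatio_pos ha hb k₁ k₂ x).ne']
    ring
  · rw [← hmix]

theorem smul_priorP_add_smul_priorP (hL : 0 ≤ L) (ha : 0 < a) (hb : 0 < b) (hab : a + b = 1)
    (hk₁ : Measurable k₁) (hk₂ : Measurable k₂) (hk₁b : ∀ s, k₁ s ∈ Icc L U)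
    (hk₂b : ∀ s, k₂ s ∈ Icc L U) :
    ENNReal.ofReal a • priorP T k₁ + ENNReal.ofReal b • priorP T k₂ =
      priorP T (mixIntensity a b k₁ k₂) := by
  have hd₁ : Measurable fun x => ENNReal.ofReal (densityZ T k₁ x) :=
    ENNReal.measurable_ofReal.comp (measurable_densityZ hk₁ hk₁b)
  unfold priorP
  rw [← withDensity_smul' _ _ ENNReal.ofReal_ne_top, ← withDensity_smul' _ _ ENNReal.ofReal_ne_top,
    ← withDensity_add_left (hd₁.const_smul _)]
  congr 1
  funext x
  simp only [Pi.add_apply, Pi.smul_apply, smul_eq_mul]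
  rw [← mixture_densityZ_eq ha hb hab hk₁ hk₂ hk₁b hk₂b, ← ENNReal.ofReal_mul ha.le,
    ← ENNReal.ofReal_mul hb.le, ENNReal.ofReal_add
      (mul_nonneg ha.le (densityZ_nonneg hL hk₁b x)) (mul_nonneg hb.le (densityZ_nonneg hL hk₂b x))]

theorem ae_nonneg_expMeasure1 : ∀ᵐ x ∂expMeasure1, 0 ≤ x :=
  (withDensity_absolutelyContinuous _ _).ae_le (ae_restrict_mem measurableSet_Ici)

theorem priorP_congr (hT : 0 ≤ T) (h : EqOn l m (Icc 0 T)) : priorP T l = priorP T m := by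
  have hint {y : ℝ} (hy₀ : 0 ≤ y) (hyT : y ≤ T) :
      ∫ s in (0:ℝ)..y, (1 - l s) = ∫ s in (0:ℝ)..y, (1 - m s) :=
    integral_congr fun s hs => by
      rw [uIcc_of_le hy₀] at hs
      simp only [h ⟨hs.1, hs.2.trans hyT⟩]
  refine withDensity_congr_ae ?_
  filter_upwards [ae_nonneg_expMeasure1] with x hx
  unfold densityZ
  split_ifs with hxT
  · rw [h ⟨hx, hxT⟩, hint hx hxT]
  · rw [hint hT le_rfl]

theorem exists_measurable_forall_mem_Icc_eqOn {s : Set ℝ} (hLU : L ≤ U) (hl : Measurable l)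
    (hls : ∀ x ∈ s, l x ∈ Icc L U) :
    ∃ m : ℝ → ℝ, Measurable m ∧ (∀ x, m x ∈ Icc L U) ∧ EqOn l m s :=
  ⟨fun x => max L (min U (l x)), measurable_const.max (measurable_const.min hl),
    fun x => ⟨le_max_left _ _, max_le hLU (min_le_left _ _)⟩,
    fun x hx => by simp only [min_eq_right (hls x hx).2, max_eq_right (hls x hx).1]⟩

end Prior

/-- Lemma 1 of the paper: the set of priors with intensity in the band `[lamL, lamU]`
is convex. -/
theorem stmt13 (Tstar lamL lamU : ℝ) (hT : 0 < Tstar) (hL : 0 < lamL) (hLU : lamL ≤ lamU)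
    (l1 l2 : ℝ → ℝ) (hm1 : Measurable l1) (hm2 : Measurable l2)
    (hb1 : ∀ s ∈ Set.Icc (0:ℝ) Tstar, l1 s ∈ Set.Icc lamL lamU)
    (hb2 : ∀ s ∈ Set.Icc (0:ℝ) Tstar, l2 s ∈ Set.Icc lamL lamU)
    (α : ℝ) (hα : α ∈ Set.Ioo (0:ℝ) 1) :
    ∃ l : ℝ → ℝ, Measurable l ∧
      (∀ s ∈ Set.Icc (0:ℝ) Tstar, l s ∈ Set.Icc lamL lamU) ∧
      ENNReal.ofReal α • priorP Tstar l1 + ENNReal.ofReal (1 - α) • priorP Tstar l2 =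
        priorP Tstar l := by
  obtain ⟨hα₀, hα₁⟩ := hα
  have hβ : 0 < 1 - α := sub_pos.2 hα₁
  obtain ⟨k₁, hk₁, hk₁b, hlk₁⟩ := exists_measurable_forall_mem_Icc_eqOn hLU hm1 hb1
  obtain ⟨k₂, hk₂, hk₂b, hlk₂⟩ := exists_measurable_forall_mem_Icc_eqOn hLU hm2 hb2
  refine ⟨mixIntensity α (1 - α) k₁ k₂, measurable_mixIntensity hk₁ hk₂ hk₁b hk₂b,
    fun s _ => mixIntensity_mem_Icc hα₀ hβ (hk₁b s) (hk₂b s), ?_⟩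
  rw [priorP_congr hT.le hlk₁, priorP_congr hT.le hlk₂]
  exact smul_priorP_add_smul_priorP hL.le hα₀ hβ (add_sub_cancel α 1) hk₁ hk₂ hk₁b hk₂b
end
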